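/- For x ∈ B_n, the matching N flips the last bit of (x,0)-type vertices exactly when the first 2n bits form a Dyck word: concretely, for a string of the form (x,0) with x a bitstring of length 2n of weight n, N flips the last bit if and only if x ∈ D_n, and M flips the last bit if and only if x ∈ D_n^-. -/

import Mathlib

/-!
Read `x` as a walk that goes up on `0` and down on `1`, so that the surplus of the prefix ending
at `j` is the height `excess x (j + 1)`. Since `x` has weight `n` the walk ends at height `0`,
and the appended `0` closes the longest prefix of surplus `1`. In the lexical order it therefore
comes first exactly when no prefix of `x` ending in `0` has positive height, and second exactly
when precisely one does. Every prefix of positive height descends from a prefix ending in `0` that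
is at least as high (the last `0` before it), so the first condition says that `x` is a Dyck word and the second
that exactly one prefix of `x` has positive height.
-/

/-- Hamming weight. -/
def wt {m : ℕ} (x : Fin m → Bool) : ℕ :=
  (Finset.univ.filter (fun i => x i = true)).card

/-- Surplus of zeros over ones in the prefix of `x` ending at position `j`. -/
def surplus {m : ℕ} (x : Fin m → Bool) (j : Fin m) : ℤ :=
  ((Finset.univ.filter (fun i => i ≤ j ∧ x i = false)).card : ℤ) -
  ((Finset.univ.filter (fun i => i ≤ j ∧ x i = true)).card : ℤ)

/-- Sorting key for the prefixes ending in 0 (i.e. for positions `j` with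
`x j = false`): decreasing surplus of zeros over ones, ties broken by
increasing prefix length.  A smaller key means earlier in the total order. -/
def key {m : ℕ} (x : Fin m → Bool) (j : Fin m) : Lex (ℤ × ℕ) :=
  toLex (-(surplus x j), (j : ℕ))

/-- Flip the bit of `x` at position `j`. -/
def flipBit {m : ℕ} (x : Fin m → Bool) (j : Fin m) : Fin m → Bool :=
  Function.update x j (!(x j))

/-- `IsN x y` : `y` is obtained from `x` by flipping the last bit of the
*first* prefix ending in 0 in the lexical total order. -/
def IsN {m : ℕ} (x y : Fin m → Bool) : Prop :=
  ∃ j, x j = false ∧ (∀ j', x j' = false → j' ≠ j → key x j < key x j') ∧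
    y = flipBit x j

/-- `IsM x y` : `y` is obtained from `x` by flipping the last bit of the
*second* prefix ending in 0 in the lexical total order. -/
def IsM {m : ℕ} (x y : Fin m → Bool) : Prop :=
  ∃ j₀ j, x j₀ = false ∧ x j = false ∧ j ≠ j₀ ∧
    (∀ j', x j' = false → j' ≠ j₀ → key x j₀ < key x j') ∧
    (∀ j', x j' = false → j' ≠ j₀ → j' ≠ j → key x j < key x j') ∧
    y = flipBit x j

/-- `B_n` : bitstrings of length `2n+1` with exactly `n` ones. -/
def Bn (n : ℕ) : Set (Fin (2 * n + 1) → Bool) := {x | wt x = n}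

/-- `B_n'` : bitstrings of length `2n+1` with exactly `n+1` ones. -/
def Bn' (n : ℕ) : Set (Fin (2 * n + 1) → Bool) := {x | wt x = n + 1}

/-- Number of occurrences of the bit `b` among the first `k` positions of `x`. -/
def cnt {m : ℕ} (x : Fin m → Bool) (b : Bool) (k : ℕ) : ℕ :=
  (Finset.univ.filter (fun i : Fin m => (i : ℕ) < k ∧ x i = b)).card

/-- `x` is a Dyck word of length `2n`: it has exactly `n` ones and every
prefix has at least as many ones as zeros. -/
def IsDyckF (n : ℕ) (x : Fin (2 * n) → Bool) : Prop :=
  wt x = n ∧ ∀ k : ℕ, cnt x false k ≤ cnt x true k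

/-- `x ∈ D_n⁻`: `x` has length `2n`, exactly `n` ones, and exactly one prefix
in which the number of ones is strictly smaller than the number of zeros. -/
def IsDyckMinusF (n : ℕ) (x : Fin (2 * n) → Bool) : Prop :=
  wt x = n ∧
  ((Finset.range (2 * n + 1)).filter
    (fun k => cnt x true k < cnt x false k)).card = 1

section

variable {m : ℕ}

theorem cnt_succ (x : Fin m → Bool) (b : Bool) {k : ℕ} (hk : k < m) :
    cnt x b (k + 1) = cnt x b k + if x ⟨k, hk⟩ = b then 1 else 0 := by
  have hsplit : ∀ i : Fin m, (if (i : ℕ) < k + 1 ∧ x i = b then 1 else 0) =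
      (if (i : ℕ) < k ∧ x i = b then 1 else 0) +
        if i = ⟨k, hk⟩ then (if x i = b then 1 else 0) else 0 := by
    intro i
    rcases eq_or_ne i ⟨k, hk⟩ with rfl | hi
    · simp
    · have : (i : ℕ) ≠ k := fun e => hi (Fin.ext e)
      simp only [hi, if_false, add_zero, show (i : ℕ) < k + 1 ↔ (i : ℕ) < k by omega]
  simp only [cnt, Finset.card_filter, hsplit, Finset.sum_add_distrib, Finset.sum_ite_eq',
    Finset.mem_univ, if_true]

theorem cnt_of_le (x : Fin m → Bool) (b : Bool) {k : ℕ} (hk : m ≤ k) :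
    cnt x b k = cnt x b m := by
  unfold cnt
  congr 1
  exact Finset.filter_congr fun i _ => by simp [i.isLt, i.isLt.trans_le hk]

theorem cnt_length (x : Fin m → Bool) (b : Bool) :
    cnt x b m = (Finset.univ.filter (fun i => x i = b)).card := by
  simp [cnt]

theorem cnt_snoc_of_le (x : Fin m → Bool) (b c : Bool) {k : ℕ} (hk : k ≤ m) :
    cnt (Fin.snoc x b : Fin (m + 1) → Bool) c k = cnt x c k := by
  simp only [cnt, Finset.card_filter, Fin.sum_univ_castSucc, Fin.snoc_castSucc, Fin.val_castSucc,
    Fin.val_last]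
  simp [show ¬ m < k by omega]

theorem cnt_false_add_cnt_true (x : Fin m → Bool) : cnt x false m + cnt x true m = m := by
  have h := Finset.card_filter_add_card_filter_not (s := Finset.univ) (fun i => x i = false)
  simpa [cnt_length] using h

def excess (x : Fin m → Bool) (k : ℕ) : ℤ :=
  cnt x false k - cnt x true k

theorem excess_zero (x : Fin m → Bool) : excess x 0 = 0 := by
  simp [excess, cnt]

theorem excess_succ (x : Fin m → Bool) {k : ℕ} (hk : k < m) :
    excess x (k + 1) = excess x k + if x ⟨k, hk⟩ = false then 1 else -1 := by
  rw [excess, excess, cnt_succ x false hk, cnt_succ x true hk]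
  cases x ⟨k, hk⟩ <;> simp <;> ring

theorem excess_of_le (x : Fin m → Bool) {k : ℕ} (hk : m ≤ k) : excess x k = excess x m := by
  rw [excess, excess, cnt_of_le x false hk, cnt_of_le x true hk]

theorem excess_length (x : Fin m → Bool) : excess x m = m - 2 * wt x := by
  have hwt : cnt x true m = wt x := cnt_length x true
  have htot := cnt_false_add_cnt_true x
  rw [excess]
  omega

theorem surplus_eq_excess (x : Fin m → Bool) (j : Fin m) : surplus x j = excess x (j + 1) := by
  simp only [surplus, excess, cnt, Fin.le_def, Nat.lt_succ_iff]

theorem excess_snoc_of_le (x : Fin m → Bool) (b : Bool) {k : ℕ} (hk : k ≤ m) :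
    excess (Fin.snoc x b : Fin (m + 1) → Bool) k = excess x k := by
  rw [excess, excess, cnt_snoc_of_le x b false hk, cnt_snoc_of_le x b true hk]

theorem excess_snoc_false_length (x : Fin m → Bool) :
    excess (Fin.snoc x false : Fin (m + 1) → Bool) (m + 1) = excess x m + 1 := by
  rw [excess_succ _ (Nat.lt_succ_self m), excess_snoc_of_le x false le_rfl]
  simp [Fin.snoc, Fin.last]

/-- The witness is the last `0` before position `k`; after it the walk only goes down. -/
theorem exists_false_excess_add (x : Fin m → Bool) {k : ℕ} (hk : k ≤ m) (hpos : 0 < excess x k) :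
    ∃ j : Fin m, x j = false ∧ (j : ℕ) < k ∧ excess x (j + 1) + (j + 1 : ℕ) = excess x k + k := by
  induction k with
  | zero => simp [excess_zero] at hpos
  | succ k ih =>
    have hkm : k < m := hk
    by_cases hb : x ⟨k, hkm⟩ = false
    · exact ⟨⟨k, hkm⟩, hb, Nat.lt_succ_self k, rfl⟩
    · rw [excess_succ x hkm, if_neg hb] at hpos ⊢
      obtain ⟨j, hj, hjk, heq⟩ := ih hkm.le (by omega)
      exact ⟨j, hj, by omega, by push_cast at heq ⊢; omega⟩

theorem key_snoc_castSucc (x : Fin m → Bool) (c : Fin m) :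
    key (Fin.snoc x false : Fin (m + 1) → Bool) c.castSucc =
      toLex (-excess x (c + 1), (c : ℕ)) := by
  rw [key, surplus_eq_excess, Fin.val_castSucc, excess_snoc_of_le x false c.isLt]

theorem key_snoc_last (x : Fin m → Bool) (h0 : excess x m = 0) :
    key (Fin.snoc x false : Fin (m + 1) → Bool) (Fin.last m) = toLex (-1, m) := by
  rw [key, surplus_eq_excess, Fin.val_last, excess_snoc_false_length, h0, zero_add]

theorem key_snoc_last_lt_castSucc_iff (x : Fin m → Bool) (h0 : excess x m = 0) (c : Fin m) :
    key (Fin.snoc x false : Fin (m + 1) → Bool) (Fin.last m) <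
      key (Fin.snoc x false : Fin (m + 1) → Bool) c.castSucc ↔ excess x (c + 1) ≤ 0 := by
  rw [key_snoc_last x h0, key_snoc_castSucc, Prod.Lex.toLex_lt_toLex]
  have := c.isLt
  omega

theorem key_snoc_castSucc_lt_last_iff (x : Fin m → Bool) (h0 : excess x m = 0) (c : Fin m) :
    key (Fin.snoc x false : Fin (m + 1) → Bool) c.castSucc <
      key (Fin.snoc x false : Fin (m + 1) → Bool) (Fin.last m) ↔ 0 < excess x (c + 1) := by
  rw [key_snoc_last x h0, key_snoc_castSucc, Prod.Lex.toLex_lt_toLex]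
  have := c.isLt
  omega

theorem flipBit_injective (y : Fin m → Bool) : Function.Injective (flipBit y) := by
  intro j j' h
  by_contra hne
  have hj := congrFun h j
  simp [flipBit, Function.update_of_ne hne] at hj

theorem isN_snoc_flipBit_last_iff (x : Fin m → Bool) (h0 : excess x m = 0) :
    IsN (Fin.snoc x false : Fin (m + 1) → Bool) (flipBit (Fin.snoc x false) (Fin.last m)) ↔
      ∀ c, x c = false → excess x (c + 1) ≤ 0 := by
  constructor
  · rintro ⟨j, -, hmin, hflip⟩
    obtain rfl := flipBit_injective _ hflip.symm
    intro c hc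
    rw [← key_snoc_last_lt_castSucc_iff x h0]
    exact hmin c.castSucc (by simpa using hc) (Fin.castSucc_lt_last c).ne
  · intro hnonpos
    refine ⟨Fin.last m, Fin.snoc_last _ _, fun j hj hne => ?_, rfl⟩
    obtain ⟨c, rfl⟩ := Fin.eq_castSucc_of_ne_last hne
    exact (key_snoc_last_lt_castSucc_iff x h0 c).2 (hnonpos c (by simpa using hj))

theorem isM_snoc_flipBit_last_iff (x : Fin m → Bool) (h0 : excess x m = 0) :
    IsM (Fin.snoc x false : Fin (m + 1) → Bool) (flipBit (Fin.snoc x false) (Fin.last m)) ↔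
      ∃! a, x a = false ∧ 0 < excess x (a + 1) := by
  constructor
  · rintro ⟨j₀, j, hj₀, -, hne, hmin₀, hmin, hflip⟩
    obtain rfl := flipBit_injective _ hflip.symm
    obtain ⟨a, rfl⟩ := Fin.eq_castSucc_of_ne_last hne.symm
    refine ⟨a, ⟨by simpa using hj₀, (key_snoc_castSucc_lt_last_iff x h0 a).1
      (hmin₀ _ (Fin.snoc_last _ _) hne)⟩, fun c ⟨hc, hpos⟩ => ?_⟩
    by_contra hca
    have hlt := hmin c.castSucc (by simpa using hc) (Fin.castSucc_injective _ |>.ne hca)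
      (Fin.castSucc_lt_last c).ne
    rw [key_snoc_last_lt_castSucc_iff x h0] at hlt
    omega
  · rintro ⟨a, ⟨ha, hpos⟩, huniq⟩
    have ha_lt := (key_snoc_castSucc_lt_last_iff x h0 a).2 hpos
    have hlast_lt : ∀ j, (Fin.snoc x false : Fin (m + 1) → Bool) j = false → j ≠ a.castSucc →
        j ≠ Fin.last m → key (Fin.snoc x false : Fin (m + 1) → Bool) (Fin.last m) <
          key (Fin.snoc x false : Fin (m + 1) → Bool) j := by
      intro j hj hja hjl
      obtain ⟨c, rfl⟩ := Fin.eq_castSucc_of_ne_last hjl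
      rw [key_snoc_last_lt_castSucc_iff x h0]
      by_contra hc
      exact hja (congrArg _ (huniq c ⟨by simpa using hj, by omega⟩))
    refine ⟨a.castSucc, Fin.last m, by simpa using ha, Fin.snoc_last _ _,
      (Fin.castSucc_lt_last a).ne', fun j hj hja => ?_, hlast_lt, rfl⟩
    rcases eq_or_ne j (Fin.last m) with rfl | hjl
    · exact ha_lt
    · exact ha_lt.trans (hlast_lt j hj hja hjl)

theorem forall_cnt_false_le_cnt_true_iff (x : Fin m → Bool) :
    (∀ k, cnt x false k ≤ cnt x true k) ↔ ∀ c, x c = false → excess x (c + 1) ≤ 0 := by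
  constructor
  · intro h c _
    have := h (c + 1)
    rw [excess]
    omega
  · intro h k
    by_contra hk
    obtain ⟨k', hk'm, hpos⟩ : ∃ k' ≤ m, 0 < excess x k' := by
      rcases le_total k m with hkm | hmk
      · exact ⟨k, hkm, by rw [excess]; omega⟩
      · exact ⟨m, le_rfl, by rw [← excess_of_le x hmk, excess]; omega⟩
    obtain ⟨j, hj, hjk, heq⟩ := exists_false_excess_add x hk'm hpos
    have := h j hj
    omega

theorem card_filter_cnt_true_lt_cnt_false_eq_one_iff (x : Fin m → Bool) :
    ((Finset.range (m + 1)).filter (fun k => cnt x true k < cnt x false k)).card = 1 ↔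
      ∃! a, x a = false ∧ 0 < excess x (a + 1) := by
  set S := (Finset.range (m + 1)).filter (fun k => cnt x true k < cnt x false k)
  have hmem : ∀ k, k ∈ S ↔ k ≤ m ∧ 0 < excess x k := by
    intro k
    simp only [S, Finset.mem_filter, Finset.mem_range, excess]
    omega
  rw [Finset.card_eq_one]
  constructor
  · rintro ⟨k, hS⟩
    have hk := (hmem k).1 (hS ▸ Finset.mem_singleton_self k)
    obtain ⟨j, hj, hjk, heq⟩ := exists_false_excess_add x hk.1 hk.2
    have hsucc : ∀ c : Fin m, 0 < excess x (c + 1) → (c : ℕ) + 1 = k := fun c hc => by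
      simpa [hS] using (hmem _).2 ⟨c.isLt, hc⟩
    refine ⟨j, ⟨hj, by omega⟩, fun c ⟨_, hc⟩ => Fin.ext ?_⟩
    have := hsucc c hc
    have := hsucc j (by omega)
    omega
  · rintro ⟨a, ⟨ha, hpos⟩, huniq⟩
    -- a second step up into positive height would end at another positive prefix ending in `0`
    have ha_one : excess x (a + 1) = 1 := by
      by_contra hne
      have hstep := excess_succ x a.isLt
      simp only [Fin.eta, ha, if_true] at hstep
      obtain ⟨j, hj, hja, heq⟩ := exists_false_excess_add x a.isLt.le (by omega)
      have := huniq j ⟨hj, by omega⟩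
      omega
    refine ⟨a + 1, Finset.eq_singleton_iff_unique_mem.2 ⟨(hmem _).2 ⟨a.isLt, hpos⟩, fun k hk => ?_⟩⟩
    obtain ⟨hkm, hk⟩ := (hmem k).1 hk
    obtain ⟨j, hj, hjk, heq⟩ := exists_false_excess_add x hkm hk
    obtain rfl := huniq j ⟨hj, by omega⟩
    omega

end

theorem lastBit_flip_characterization_general (n : ℕ)
    (x : Fin (2 * n) → Bool) (hx : wt x = n) :
    (IsN (Fin.snoc x false) (flipBit (Fin.snoc x false) (Fin.last (2 * n))) ↔
      IsDyckF n x) ∧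
    (IsM (Fin.snoc x false) (flipBit (Fin.snoc x false) (Fin.last (2 * n))) ↔
      IsDyckMinusF n x) := by
  have h0 : excess x (2 * n) = 0 := by
    rw [excess_length, hx]
    push_cast
    ring
  rw [isN_snoc_flipBit_last_iff x h0, isM_snoc_flipBit_last_iff x h0, IsDyckF, IsDyckMinusF,
    forall_cnt_false_le_cnt_true_iff, card_filter_cnt_true_lt_cnt_false_eq_one_iff]
  exact ⟨(and_iff_right hx).symm, (and_iff_right hx).symm⟩

/-- For a vertex of the form `(x,0)` with `x` of length `2n` and weight `n`,
the matching `N` flips the last bit if and only if `x ∈ D_n`, and the matching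
`M` flips the last bit if and only if `x ∈ D_n⁻`. -/
theorem lastBit_flip_characterization (n : ℕ) (hn : 1 ≤ n)
    (x : Fin (2 * n) → Bool) (hx : wt x = n) :
    (IsN (Fin.snoc x false) (flipBit (Fin.snoc x false) (Fin.last (2 * n))) ↔
      IsDyckF n x) ∧
    (IsM (Fin.snoc x false) (flipBit (Fin.snoc x false) (Fin.last (2 * n))) ↔
      IsDyckMinusF n x) :=
  lastBit_flip_characterization_general n x hx
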